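/- arXiv:math/9309208 — 10 statements merged into one kernel-verified Lean document; each statement's English description precedes it below -/
import Mathlib

section
/- Let A = (A₋, A₊, A) and B = (B₋, B₊, B) be objects of PV and define A ⊕ B = (A₋ × B₋, A₊ + B₊, V), where A₊ + B₊ is the disjoint union and V((a,b), x) holds iff A(a,x) when x ∈ A₊ and iff B(b,x) when x ∈ B₊. Then A ⊕ B, together with the evident injection morphisms from A and from B, is a categorical coproduct of A and B in PV: for every object C and morphisms g : A → C and h : B → C there is a unique morphism [g,h] : A ⊕ B → C whose composites with the injections are g and h. -/
/-- An object of the category `PV`. -/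
structure PVObj where
  Q : Type u
  A : Type u
  rel : Q → A → Prop

/-- `(fm, fp)` is a morphism from `X` to `Y` in `PV`. -/
def PVObj.IsHom (X Y : PVObj) (fm : Y.Q → X.Q) (fp : X.A → Y.A) : Prop :=
  ∀ (b : Y.Q) (a : X.A), X.rel (fm b) a → Y.rel b (fp a)

/-- The additive disjunction ("plus"): `A ⊕ B = (A₋ × B₋, A₊ + B₊, V)`. -/
def PVObj.oplus (X Y : PVObj) : PVObj :=
  ⟨X.Q × Y.Q, X.A ⊕ Y.A, fun q a =>
    match a with
    | Sum.inl x => X.rel q.1 x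
    | Sum.inr y => Y.rel q.2 y⟩

/-- `A ⊕ B`, with the evident injections, is a categorical coproduct of `A` and `B` in `PV`:
the injections are morphisms, and every pair of morphisms `g : A → C`, `h : B → C`
factors uniquely through `A ⊕ B` (recall `(v ∘ u)₋ = u₋ ∘ v₋` and `(v ∘ u)₊ = v₊ ∘ u₊`). -/
theorem pv_oplus_is_coproduct (X Y : PVObj) :
    X.IsHom (X.oplus Y) Prod.fst Sum.inl ∧
    Y.IsHom (X.oplus Y) Prod.snd Sum.inr ∧
    ∀ (C : PVObj) (gm : C.Q → X.Q) (gp : X.A → C.A)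
      (hm : C.Q → Y.Q) (hp : Y.A → C.A),
      X.IsHom C gm gp → Y.IsHom C hm hp →
      ∃! p : (C.Q → X.Q × Y.Q) × (X.A ⊕ Y.A → C.A),
        (X.oplus Y).IsHom C p.1 p.2 ∧
        (Prod.fst ∘ p.1 = gm ∧ p.2 ∘ Sum.inl = gp) ∧
        (Prod.snd ∘ p.1 = hm ∧ p.2 ∘ Sum.inr = hp) := by
  refine ⟨fun b a h => h, fun b a h => h, fun C gm gp hm hp hg hh => ?_⟩
  refine ⟨⟨fun c => (gm c, hm c), Sum.elim gp hp⟩, ⟨?_, ⟨rfl, rfl⟩, ⟨rfl, rfl⟩⟩, ?_⟩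
  · rintro b (a | a) h
    · exact hg b a h
    · exact hh b a h
  · rintro ⟨pm, pp⟩ ⟨_, ⟨e1, e2⟩, ⟨e3, e4⟩⟩
    refine Prod.ext ?_ ?_
    · funext c
      exact Prod.ext (congrFun e1 c) (congrFun e3 c)
    · funext a
      cases a with
      | inl x => exact congrFun e2 x
      | inr y => exact congrFun e4 y
end

section
/- The cut rule is sound for the truth notion ⊨₂ with the provisional par: if A, B, C are objects of PV and ⊨₂ (B ⅋̄ A) and ⊨₂ (C ⅋̄ A^⊥), then ⊨₂ (B ⅋̄ C). Concretely, if (b,x) ∈ B₊ × A₊ correctly answers all questions in B ⅋̄ A and (c,y) ∈ C₊ × A₋ correctly answers all questions in C ⅋̄ A^⊥, then (b,c) correctly answers all questions in B ⅋̄ C. -/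
/-- Linear negation `A^⊥ = (A₊, A₋, ¬ converse)`. -/
def PVObj.neg (X : PVObj) : PVObj :=
  ⟨X.A, X.Q, fun x y => ¬ X.rel y x⟩

/-- The provisional par: `A ⅋̄ B = (A₋ × B₋, A₊ × B₊, P)`,
with `P((x,y),(a,b))` iff `A(x,a)` or `B(y,b)`. -/
def PVObj.dpar (X Y : PVObj) : PVObj :=
  ⟨X.Q × Y.Q, X.A × Y.A, fun q a => X.rel q.1 a.1 ∨ Y.rel q.2 a.2⟩

/-- The second truth notion: one answer is correct for all questions. -/
def PVObj.models2 (X : PVObj) : Prop := ∃ a : X.A, ∀ q : X.Q, X.rel q a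

/-- The cut rule is sound for `⊨₂` with the provisional par:
if `⊨₂ (B ⅋̄ A)` and `⊨₂ (C ⅋̄ A^⊥)` then `⊨₂ (B ⅋̄ C)`; concretely, if `(b,x)`
answers all questions of `B ⅋̄ A` and `(c,y)` answers all questions of `C ⅋̄ A^⊥`,
then `(b,c)` answers all questions of `B ⅋̄ C`. -/
theorem pv_cut_sound_models2 (A B C : PVObj) :
    ((B.dpar A).models2 → (C.dpar A.neg).models2 → (B.dpar C).models2) ∧
    (∀ (b : B.A) (x : A.A) (c : C.A) (y : A.Q),
      (∀ q : (B.dpar A).Q, (B.dpar A).rel q (b, x)) →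
      (∀ q : (C.dpar A.neg).Q, (C.dpar A.neg).rel q (c, y)) →
      ∀ q : (B.dpar C).Q, (B.dpar C).rel q (b, c)) := by
  constructor
  · rintro ⟨⟨b, x⟩, h1⟩ ⟨⟨c, y⟩, h2⟩
    refine ⟨(b, c), fun q => ?_⟩
    rcases h1 (q.1, y) with h | h
    · exact Or.inl h
    · rcases h2 (q.2, x) with h' | h'
      · exact Or.inr h'
      · exact absurd h h'
  · intro b x c y h1 h2 q
    rcases h1 (q.1, y) with h | h
    · exact Or.inl h
    · rcases h2 (q.2, x) with h' | h'
      · exact Or.inr h'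
      · exact absurd h h'
end

section
/- The cut rule is sound for the cross-dependence notion of truth: let A, B, C be objects of PV and suppose there are functions f : B₋ → A₊ and g : A₋ → B₊ such that for all b ∈ B₋ and x ∈ A₋, B(b, g(x)) or A(x, f(b)); and functions f' : C₋ → A₋ and g' : A₊ → C₊ such that for all c ∈ C₋ and y ∈ A₊, C(c, g'(y)) or ¬A(f'(c), y). Then the functions g'∘f : B₋ → C₊ and g∘f' : C₋ → B₊ satisfy, for all b ∈ B₋ and c ∈ C₋, B(b, g(f'(c))) or C(c, g'(f(b))). -/
/-- The cut rule is sound for the cross-dependence notion of truth. -/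
theorem pv_cut_sound_cross_dependence (A B C : PVObj)
    (f : B.Q → A.A) (g : A.Q → B.A) (f' : C.Q → A.Q) (g' : A.A → C.A)
    (h1 : ∀ (b : B.Q) (x : A.Q), B.rel b (g x) ∨ A.rel x (f b))
    (h2 : ∀ (c : C.Q) (y : A.A), C.rel c (g' y) ∨ ¬ A.rel (f' c) y) :
    ∀ (b : B.Q) (c : C.Q), B.rel b (g (f' c)) ∨ C.rel c (g' (f b)) := by
  intro b c
  rcases h1 b (f' c) with h | h
  · exact Or.inl h
  · rcases h2 c (f b) with h' | h'
    · exact Or.inr h'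
    · exact absurd h h'
end

section
/- The PV interpretation validates the mix rule: for all objects A and B of PV, if ⊨ A and ⊨ B then ⊨ (A ⅋ B). -/
/-- The par operation: `A ⅋ B = (A₋ × B₋, A₊^{B₋} × B₊^{A₋}, P)`,
with `P((x,y),(f,g))` iff `A(x, f(y))` or `B(y, g(x))`. -/
def PVObj.par (X Y : PVObj) : PVObj :=
  ⟨X.Q × Y.Q, (Y.Q → X.A) × (X.Q → Y.A),
    fun q a => X.rel q.1 (a.1 q.2) ∨ Y.rel q.2 (a.2 q.1)⟩

/-- Truth (`⊨`): some answer is correct for all questions. -/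
def PVObj.models (X : PVObj) : Prop := ∃ a : X.A, ∀ q : X.Q, X.rel q a

/-- The `PV` interpretation validates the mix rule: if `⊨ A` and `⊨ B`, then `⊨ A ⅋ B`. -/
theorem pv_mix (A B : PVObj) (hA : A.models) (hB : B.models) :
    (A.par B).models := by
  obtain ⟨a, ha⟩ := hA
  obtain ⟨b, hb⟩ := hB
  exact ⟨⟨fun _ => a, fun _ => b⟩, fun q => Or.inl (ha q.1)⟩
end

section
/- The PV interpretation satisfies the special case of weakening A^⊥ ⅋ (A ⅋ A): for every object A of PV, ⊨ (A^⊥ ⅋ (A ⅋ A)). -/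
/-- The `PV` interpretation satisfies the special weakening `A^⊥ ⅋ (A ⅋ A)`. -/
theorem pv_special_weakening (A : PVObj) :
    (A.neg.par (A.par A)).models := by
  refine ⟨⟨fun q => q.1, fun a => (fun _ => a, fun _ => a)⟩, ?_⟩
  rintro ⟨a, q₁, q₂⟩
  simp only [PVObj.par, PVObj.neg]
  tauto
end

section
/- General weakening A^⊥ ⅋ (A ⅋ B) is not satisfied by the PV interpretation: if A and B are objects of PV such that B₊ is empty while A₊, A₋, and B₋ are all nonempty, then ⊨ (A^⊥ ⅋ (A ⅋ B)) fails. -/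
/-- General weakening `A^⊥ ⅋ (A ⅋ B)` fails in the `PV` interpretation
whenever `B₊` is empty while `A₊`, `A₋`, `B₋` are nonempty. -/
theorem pv_general_weakening_fails (A B : PVObj)
    (hBp : IsEmpty B.A) (hAp : Nonempty A.A) (hAm : Nonempty A.Q)
    (hBm : Nonempty B.Q) :
    ¬ (A.neg.par (A.par B)).models := by
  rintro ⟨⟨f, g⟩, -⟩
  exact hBp.false ((g hAp.some).2 hAm.some)
end

section
/- There exist functions α : (ℕ → ℕ) → 𝒫(ℕ) and β : {X ⊆ ℕ : X infinite} → (ℕ → ℕ) such that for every infinite X ⊆ ℕ and every g : ℕ → ℕ, if g dominates β(X) then α(g) splits X. Equivalently, (β, α) is a morphism in PV from the object (ℕ^ℕ, ℕ^ℕ, is dominated by) to the object ({X ⊆ ℕ : X infinite}, 𝒫(ℕ), is split by). -/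
/-- `S` splits `Y`: both `Y ∩ S` and `Y \ S` are infinite. -/
def Splits (S Y : Set ℕ) : Prop := (Y ∩ S).Infinite ∧ (Y \ S).Infinite

/-- `f` dominates `g`: `g n ≤ f n` for all but finitely many `n`. -/
def Dominates (f g : ℕ → ℕ) : Prop := ∀ᶠ n in Filter.atTop, g n ≤ f n

/-- The object `(ℕ^ℕ, ℕ^ℕ, is dominated by)`. -/
def Dobj : PVObj := ⟨ℕ → ℕ, ℕ → ℕ, fun g f => Dominates f g⟩

/-- The object `({X ⊆ ℕ : X infinite}, 𝒫(ℕ), is split by)`. -/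
def Sobj : PVObj := ⟨{X : Set ℕ // X.Infinite}, Set ℕ, fun X S => Splits S X.val⟩

/-- Iterated "blocks" determined by `g`. -/
def Gfun (g : ℕ → ℕ) : ℕ → ℕ
  | 0 => 0
  | n + 1 => max (g (Gfun g n)) (Gfun g n) + 1

lemma Gfun_lt_succ (g : ℕ → ℕ) (n : ℕ) : Gfun g n < Gfun g (n + 1) := by
  simp [Gfun, Nat.lt_succ_iff]

lemma Gfun_strictMono (g : ℕ → ℕ) : StrictMono (Gfun g) :=
  strictMono_nat_of_lt_succ (Gfun_lt_succ g)

lemma Gfun_ge (g : ℕ → ℕ) (n : ℕ) : n ≤ Gfun g n := by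
  induction n with
  | zero => simp [Gfun]
  | succ n ih => exact Nat.lt_of_le_of_lt ih (Gfun_lt_succ g n)

lemma g_lt_Gfun_succ (g : ℕ → ℕ) (n : ℕ) : g (Gfun g n) < Gfun g (n + 1) := by
  simp [Gfun, Nat.lt_succ_iff]

/-- The index of the block containing `m`. -/
def idx (g : ℕ → ℕ) (m : ℕ) : ℕ := Nat.findGreatest (fun n => Gfun g n ≤ m) m

lemma idx_spec (g : ℕ → ℕ) (m : ℕ) : Gfun g (idx g m) ≤ m :=
  Nat.findGreatest_spec (P := fun n => Gfun g n ≤ m) (Nat.zero_le m) (by simp [Gfun])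

lemma idx_eq (g : ℕ → ℕ) {n m : ℕ} (h1 : Gfun g n ≤ m) (h2 : m < Gfun g (n + 1)) :
    idx g m = n := by
  have hle : n ≤ idx g m :=
    Nat.le_findGreatest (le_trans (Gfun_ge g n) h1) h1
  have hge : idx g m ≤ n := by
    by_contra hc
    push_neg at hc
    have : Gfun g (n + 1) ≤ Gfun g (idx g m) := (Gfun_strictMono g).monotone hc
    exact absurd (lt_of_lt_of_le h2 (le_trans this (idx_spec g m))) (lt_irrefl m)
  exact le_antisymm hge hle

/-- There are `α : (ℕ → ℕ) → 𝒫(ℕ)` and `β : {X ⊆ ℕ : X infinite} → ℕ^ℕ` such that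
whenever `g` dominates `β X`, `α g` splits `X`; i.e. `(β, α)` is a `PV` morphism
from `(ℕ^ℕ, ℕ^ℕ, is dominated by)` to `({X : infinite}, 𝒫(ℕ), is split by)`. -/
theorem dominating_to_splitting_morphism :
    ∃ (α : (ℕ → ℕ) → Set ℕ) (β : {X : Set ℕ // X.Infinite} → ℕ → ℕ),
      (∀ (X : {X : Set ℕ // X.Infinite}) (g : ℕ → ℕ),
        Dominates g (β X) → Splits (α g) X.val) ∧
      Dobj.IsHom Sobj β α := by
  classical
  set α : (ℕ → ℕ) → Set ℕ := fun g => {m | Even (idx g m)} with hα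
  set B : {X : Set ℕ // X.Infinite} → ℕ → ℕ :=
    fun X m => (X.prop.exists_gt m).choose with hB
  have hmain : ∀ (X : {X : Set ℕ // X.Infinite}) (g : ℕ → ℕ),
      Dominates g (B X) → Splits (α g) X.val := by
    intro X g hdom
    set β : ℕ → ℕ := fun m => (X.prop.exists_gt m).choose with hβ2
    have hβmem : ∀ m, β m ∈ X.val := fun m => (X.prop.exists_gt m).choose_spec.1
    have hβgt : ∀ m, m < β m := fun m => (X.prop.exists_gt m).choose_spec.2
    rw [Dominates, Filter.eventually_atTop] at hdom
    obtain ⟨M, hM⟩ := hdom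
    -- For every `n` with `Gfun g n ≥ M`, the block `[Gfun g n, Gfun g (n+1))`
    -- contains the element `β (Gfun g n)` of `X`.
    have key : ∀ n, M ≤ Gfun g n →
        β (Gfun g n) ∈ X.val ∧ Gfun g n < β (Gfun g n) ∧ idx g (β (Gfun g n)) = n := by
      intro n hn
      have h1 : β (Gfun g n) ≤ g (Gfun g n) := hM _ hn
      have h2 : β (Gfun g n) < Gfun g (n + 1) := lt_of_le_of_lt h1 (g_lt_Gfun_succ g n)
      exact ⟨hβmem _, hβgt _, idx_eq g (le_of_lt (hβgt _)) h2⟩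
    constructor
    · apply Set.infinite_of_forall_exists_gt
      intro a
      set n := 2 * (max M a + 1) with hn
      have hMn : M ≤ Gfun g n := le_trans (le_trans (le_max_left M a)
        (by omega)) (Gfun_ge g n)
      obtain ⟨hmem, hgt, hidx⟩ := key n hMn
      refine ⟨β (Gfun g n), ⟨hmem, ?_⟩, ?_⟩
      · show Even (idx g (β (Gfun g n)))
        rw [hidx]
        exact ⟨max M a + 1, by omega⟩
      · have : a < n := by omega
        exact lt_trans (lt_of_lt_of_le this (Gfun_ge g n)) hgt
    · apply Set.infinite_of_forall_exists_gt
      intro a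
      set n := 2 * (max M a + 1) + 1 with hn
      have hMn : M ≤ Gfun g n := le_trans (le_trans (le_max_left M a)
        (by omega)) (Gfun_ge g n)
      obtain ⟨hmem, hgt, hidx⟩ := key n hMn
      refine ⟨β (Gfun g n), ⟨hmem, ?_⟩, ?_⟩
      · show ¬ Even (idx g (β (Gfun g n)))
        rw [hidx]
        rintro ⟨r, hr⟩
        omega
      · have : a < n := by omega
        exact lt_trans (lt_of_lt_of_le this (Gfun_ge g n)) hgt
  exact ⟨α, B, hmain, fun X g h => hmain X g h⟩
end

section
/- The splitting number is at most the dominating number: 𝔰 ≤ 𝔡. -/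
/-- The splitting number `𝔰`: the smallest cardinality of a family of subsets of `ℕ`
such that every infinite subset of `ℕ` is split by some member. -/
noncomputable def splittingNumber : Cardinal :=
  sInf {c | ∃ S : Set (Set ℕ), Cardinal.mk S = c ∧
    ∀ Y : Set ℕ, Y.Infinite → ∃ X ∈ S, Splits X Y}

/-- The dominating number `𝔡`: the smallest cardinality of a family of functions
`ℕ → ℕ` such that every function is dominated by some member. -/
noncomputable def dominatingNumber : Cardinal :=
  sInf {c | ∃ D : Set (ℕ → ℕ), Cardinal.mk D = c ∧
    ∀ g : ℕ → ℕ, ∃ f ∈ D, Dominates f g}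

/-- Iterated "blow-up" of `f`: a strictly increasing sequence of block endpoints. -/
def iterF (f : ℕ → ℕ) : ℕ → ℕ
  | 0 => 0
  | k + 1 => (Finset.range (iterF f k + 1)).sup f + iterF f k + 1

lemma iterF_strictMono (f : ℕ → ℕ) : StrictMono (iterF f) :=
  strictMono_nat_of_lt_succ fun k => by simp only [iterF]; omega

lemma lt_iterF_succ (f : ℕ → ℕ) {n k : ℕ} (h : n ≤ iterF f k) : f n < iterF f (k + 1) := by
  have : f n ≤ (Finset.range (iterF f k + 1)).sup f :=
    Finset.le_sup (Finset.mem_range.2 (by omega))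
  simp only [iterF]; omega

/-- The union of the even-indexed blocks `[iterF f k, iterF f (k+1))`. -/
def blockSet (f : ℕ → ℕ) : Set ℕ :=
  {m | ∃ k, Even k ∧ iterF f k ≤ m ∧ m < iterF f (k + 1)}

lemma block_unique (f : ℕ → ℕ) {m j k : ℕ}
    (hj : iterF f j ≤ m ∧ m < iterF f (j + 1))
    (hk : iterF f k ≤ m ∧ m < iterF f (k + 1)) : j = k := by
  rcases lt_trichotomy j k with h | h | h
  · have := (iterF_strictMono f).monotone (show j + 1 ≤ k from h)
    omega
  · exact h
  · have := (iterF_strictMono f).monotone (show k + 1 ≤ j from h)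
    omega

lemma blockSet_splits (f : ℕ → ℕ) (Y : Set ℕ) (g : ℕ → ℕ)
    (hg : ∀ n, g n ∈ Y ∧ n < g n) (hfg : Dominates f g) :
    Splits (blockSet f) Y := by
  obtain ⟨N, hN⟩ := Filter.eventually_atTop.1 hfg
  have key : ∀ k, N ≤ iterF f k →
      g (iterF f k) ∈ Y ∧ iterF f k ≤ g (iterF f k) ∧ g (iterF f k) < iterF f (k + 1) :=
    fun k hk => ⟨(hg _).1, le_of_lt (hg _).2,
      lt_of_le_of_lt (hN _ hk) (lt_iterF_succ f le_rfl)⟩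
  have hle : ∀ k, k ≤ iterF f k := fun k => (iterF_strictMono f).le_apply
  constructor
  · apply Set.infinite_of_forall_exists_gt
    intro a
    set k := 2 * (N + a + 1) with hk
    have hNk : N ≤ iterF f k := le_trans (by omega) (hle k)
    obtain ⟨hY, hlb, hub⟩ := key k hNk
    refine ⟨g (iterF f k), ⟨hY, ⟨k, ⟨N + a + 1, by omega⟩, hlb, hub⟩⟩, ?_⟩
    have := hle k
    omega
  · apply Set.infinite_of_forall_exists_gt
    intro a
    set k := 2 * (N + a + 1) + 1 with hk
    have hNk : N ≤ iterF f k := le_trans (by omega) (hle k)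
    obtain ⟨hY, hlb, hub⟩ := key k hNk
    refine ⟨g (iterF f k), ⟨hY, ?_⟩, ?_⟩
    · rintro ⟨j, hje, hj1, hj2⟩
      have := block_unique f ⟨hj1, hj2⟩ ⟨hlb, hub⟩
      obtain ⟨r, hr⟩ := hje
      omega
    · have := hle k
      omega

/-- `𝔰 ≤ 𝔡`. -/
theorem splitting_le_dominating : splittingNumber ≤ dominatingNumber := by
  have hne : {c | ∃ D : Set (ℕ → ℕ), Cardinal.mk D = c ∧
      ∀ g : ℕ → ℕ, ∃ f ∈ D, Dominates f g}.Nonempty :=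
    ⟨Cardinal.mk (Set.univ : Set (ℕ → ℕ)), Set.univ, rfl,
      fun g => ⟨g, Set.mem_univ g, Filter.Eventually.of_forall fun n => le_rfl⟩⟩
  obtain ⟨D, hD, hdom⟩ := csInf_mem hne
  have hsplit : ∀ Y : Set ℕ, Y.Infinite → ∃ X ∈ blockSet '' D, Splits X Y := by
    intro Y hY
    have hgex : ∀ n : ℕ, ∃ m ∈ Y, n < m := fun n => hY.exists_gt n
    choose g hgY hgn using hgex
    obtain ⟨f, hfD, hf⟩ := hdom g
    exact ⟨blockSet f, Set.mem_image_of_mem _ hfD,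
      blockSet_splits f Y g (fun n => ⟨hgY n, hgn n⟩) hf⟩
  calc splittingNumber ≤ Cardinal.mk (blockSet '' D) :=
        csInf_le' ⟨blockSet '' D, rfl, hsplit⟩
    _ ≤ Cardinal.mk D := Cardinal.mk_image_le
    _ = dominatingNumber := hD
end

section
/- The bounding number is at most the reaping number: 𝔟 ≤ 𝔯. -/
/-- The bounding number `𝔟`: the smallest cardinality of a family of functions
`ℕ → ℕ` such that no single function dominates all its members. -/
noncomputable def boundingNumber : Cardinal :=
  sInf {c | ∃ B : Set (ℕ → ℕ), Cardinal.mk B = c ∧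
    ¬ ∃ g : ℕ → ℕ, ∀ f ∈ B, Dominates g f}

/-- The reaping number `𝔯`: the smallest cardinality of a family of infinite subsets
of `ℕ` such that no single set splits all its members. -/
noncomputable def reapingNumber : Cardinal :=
  sInf {c | ∃ R : Set (Set ℕ), Cardinal.mk R = c ∧
    (∀ X ∈ R, X.Infinite) ∧ ¬ ∃ S : Set ℕ, ∀ X ∈ R, Splits S X}

/-- The next element of `X` strictly above `n`. -/
noncomputable def nxt (X : Set ℕ) (n : ℕ) : ℕ := sInf {m | m ∈ X ∧ n < m}

lemma nxt_spec {X : Set ℕ} (hX : X.Infinite) (n : ℕ) :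
    nxt X n ∈ X ∧ n < nxt X n := by
  have h : {m | m ∈ X ∧ n < m}.Nonempty := by
    obtain ⟨b, hb, hb'⟩ := hX.exists_gt n
    exact ⟨b, hb, hb'⟩
  exact Nat.sInf_mem h

/-- A strictly increasing majorant step. -/
def stp (g : ℕ → ℕ) (n : ℕ) : ℕ := n + 1 + (Finset.range (n + 1)).sup g

lemma lt_stp (g : ℕ → ℕ) (n : ℕ) : n < stp g n := by
  simp [stp]; omega

lemma g_lt_stp (g : ℕ → ℕ) (n : ℕ) : g n < stp g n := by
  have : g n ≤ (Finset.range (n + 1)).sup g :=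
    Finset.le_sup (Finset.self_mem_range_succ n)
  simp [stp]; omega

/-- The interval endpoints. -/
def seqA (g : ℕ → ℕ) : ℕ → ℕ
  | 0 => 0
  | k + 1 => stp g (seqA g k)

lemma seqA_strictMono (g : ℕ → ℕ) : StrictMono (seqA g) :=
  strictMono_nat_of_lt_succ fun k => lt_stp g (seqA g k)

lemma le_seqA (g : ℕ → ℕ) (k : ℕ) : k ≤ seqA g k := by
  induction k with
  | zero => simp [seqA]
  | succ k ih => have := lt_stp g (seqA g k); simp only [seqA]; omega

/-- `𝔟 ≤ 𝔯`. -/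
theorem bounding_le_reaping : boundingNumber ≤ reapingNumber := by
  have hne : {c | ∃ R : Set (Set ℕ), Cardinal.mk R = c ∧
      (∀ X ∈ R, X.Infinite) ∧ ¬ ∃ S : Set ℕ, ∀ X ∈ R, Splits S X}.Nonempty := by
    refine ⟨_, {X : Set ℕ | X.Infinite}, rfl, fun X hX => hX, ?_⟩
    rintro ⟨S, hS⟩
    by_cases h : S.Infinite
    · have := (hS S h).2
      simp at this
    · have hc : Sᶜ.Infinite := by
        rw [Set.not_infinite] at h
        exact Set.infinite_of_finite_compl (by simpa using h)
      have := (hS Sᶜ hc).1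
      simp [Set.inter_comm] at this
  refine le_csInf hne ?_
  rintro c ⟨R, rfl, hinf, hreap⟩
  -- the unbounded family
  set B : Set (ℕ → ℕ) := nxt '' R with hB
  have hBmem : Cardinal.mk B ∈ {c | ∃ B : Set (ℕ → ℕ), Cardinal.mk B = c ∧
      ¬ ∃ g : ℕ → ℕ, ∀ f ∈ B, Dominates g f} := by
    refine ⟨B, rfl, ?_⟩
    rintro ⟨g, hg⟩
    apply hreap
    -- build the splitting set from g
    set a : ℕ → ℕ := seqA g with ha
    refine ⟨⋃ k, Set.Ico (a (2 * k)) (a (2 * k + 1)), fun X hX => ?_⟩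
    have hXinf := hinf X hX
    have hdom : Dominates g (nxt X) := hg _ ⟨X, hX, rfl⟩
    obtain ⟨N, hN⟩ := Filter.eventually_atTop.1 hdom
    have hmono := seqA_strictMono g
    -- nxt X (a j) lands in [a j, a (j+1)) for j ≥ N
    have key : ∀ j, N ≤ j → nxt X (a j) ∈ X ∧
        a j ≤ nxt X (a j) ∧ nxt X (a j) < a (j + 1) := by
      intro j hj
      obtain ⟨hmem, hgt⟩ := nxt_spec hXinf (a j)
      refine ⟨hmem, le_of_lt hgt, ?_⟩
      have h1 : nxt X (a j) ≤ g (a j) := hN (a j) (le_trans hj (le_seqA g j))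
      have h2 : g (a j) < stp g (a j) := g_lt_stp g (a j)
      have : a (j + 1) = stp g (a j) := rfl
      omega
    constructor
    · -- X ∩ S infinite
      apply Set.infinite_of_forall_exists_gt
      intro n
      set j := 2 * (N + n) with hj
      have hjN : N ≤ j := by omega
      obtain ⟨hmem, hge, hlt⟩ := key j hjN
      refine ⟨nxt X (a j), ⟨hmem, Set.mem_iUnion.2 ⟨N + n, hge, hlt⟩⟩, ?_⟩
      have h1 : n ≤ j := by omega
      have h2 : j ≤ a j := le_seqA g j
      have := nxt_spec hXinf (a j)
      omega
    · -- X \ S infinite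
      apply Set.infinite_of_forall_exists_gt
      intro n
      set j := 2 * (N + n) + 1 with hj
      have hjN : N ≤ j := by omega
      obtain ⟨hmem, hge, hlt⟩ := key j hjN
      refine ⟨nxt X (a j), ⟨hmem, ?_⟩, ?_⟩
      · intro hS
        obtain ⟨_, ⟨k, rfl⟩, hk⟩ := hS
        simp only [Set.mem_Ico] at hk
        rcases le_or_gt (2 * k + 1) j with h | h
        · have : a (2 * k + 1) ≤ a j := hmono.monotone h
          omega
        · have hkj : j + 1 ≤ 2 * k := by omega
          have : a (j + 1) ≤ a (2 * k) := hmono.monotone hkj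
          omega
      · have h1 : n ≤ j := by omega
        have h2 : j ≤ a j := le_seqA g j
        omega
  calc boundingNumber ≤ Cardinal.mk B := csInf_le' hBmem
    _ ≤ Cardinal.mk R := Cardinal.mk_image_le
end

section
/- The homogeneity number is bounded above by the maximum of the σ-reaping number and the dominating number: 𝔥𝔬𝔪 ≤ max{𝔯_σ, 𝔡}. -/
/-- `H` is homogeneous for a 2-coloring `p` of pairs of natural numbers:
all two-element subsets of `H` get the same color. -/
def Homogeneous (p : Sym2 ℕ → Bool) (H : Set ℕ) : Prop :=
  ∃ c : Bool, ∀ x ∈ H, ∀ y ∈ H, x ≠ y → p s(x, y) = c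

/-- The σ-reaping number `𝔯_σ`: the smallest cardinality of a family `R` of infinite
subsets of `ℕ` such that for any countably many subsets `S k` of `ℕ`, some member
of `R` is not split by any `S k`. -/
noncomputable def sigmaReapingNumber : Cardinal :=
  sInf {c | ∃ R : Set (Set ℕ), Cardinal.mk R = c ∧
    (∀ X ∈ R, X.Infinite) ∧
    ∀ S : ℕ → Set ℕ, ∃ X ∈ R, ∀ k : ℕ, ¬ Splits (S k) X}

/-- The homogeneity number `𝔥𝔬𝔪`: the smallest cardinality of a family `H` of infinite
subsets of `ℕ` such that every 2-coloring of pairs has a homogeneous set in `H`. -/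
noncomputable def homNumber : Cardinal :=
  sInf {c | ∃ F : Set (Set ℕ), Cardinal.mk F = c ∧
    (∀ H ∈ F, H.Infinite) ∧
    ∀ p : Sym2 ℕ → Bool, ∃ H ∈ F, Homogeneous p H}

section Aux

open Classical in
/-- least element of `X` greater or equal to `n` -/
noncomputable def nextElt (X : Set ℕ) (n : ℕ) : ℕ := sInf {m | m ∈ X ∧ n < m}

lemma nextElt_mem {X : Set ℕ} (hX : X.Infinite) (n : ℕ) :
    nextElt X n ∈ X ∧ n < nextElt X n := by
  have h : {m | m ∈ X ∧ n < m}.Nonempty := by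
    obtain ⟨m, hm, hm'⟩ := hX.exists_gt n
    exact ⟨m, hm, hm'⟩
  exact Nat.sInf_mem h

open Classical in
noncomputable def chain (S : ℕ → Set ℕ) : ℕ → Set ℕ
  | 0 => Set.univ
  | k+1 => if ((chain S k) ∩ S k).Infinite then (chain S k) ∩ S k else (chain S k) \ S k

lemma chain_infinite (S : ℕ → Set ℕ) : ∀ k, (chain S k).Infinite := by
  intro k
  induction k with
  | zero => exact Set.infinite_univ
  | succ k ih =>
    rw [chain]
    split_ifs with h
    · exact h
    · have hfin : ((chain S k) ∩ S k).Finite := Set.not_infinite.mp h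
      intro hcon
      exact ih (((hcon.union hfin).subset (fun m hm => by
        by_cases hs : m ∈ S k
        · exact Or.inr ⟨hm, hs⟩
        · exact Or.inl ⟨hm, hs⟩)))

lemma chain_succ_subset (S : ℕ → Set ℕ) (k : ℕ) : chain S (k+1) ⊆ chain S k := by
  rw [chain]; split_ifs
  · exact Set.inter_subset_left
  · exact Set.diff_subset

lemma chain_subset (S : ℕ → Set ℕ) {j k : ℕ} (h : k ≤ j) : chain S j ⊆ chain S k := by
  induction j with
  | zero => simp_all
  | succ j ih =>
    rcases Nat.lt_or_ge k (j+1) with h' | h'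
    · exact (chain_succ_subset S j).trans (ih (Nat.lt_succ_iff.mp h'))
    · have : k = j + 1 := le_antisymm h h'
      subst this; rfl

lemma chain_decides (S : ℕ → Set ℕ) (k : ℕ) :
    (∀ m ∈ chain S (k+1), m ∈ S k) ∨ (∀ m ∈ chain S (k+1), m ∉ S k) := by
  rw [chain]; split_ifs
  · exact Or.inl (fun m hm => hm.2)
  · exact Or.inr (fun m hm => hm.2)

noncomputable def diagSeq (S : ℕ → Set ℕ) : ℕ → ℕ
  | 0 => nextElt (chain S 0) 0
  | k+1 => nextElt (chain S (k+1)) (diagSeq S k)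

lemma diagSeq_mem (S : ℕ → Set ℕ) : ∀ k, diagSeq S k ∈ chain S k := by
  intro k
  cases k with
  | zero => exact (nextElt_mem (chain_infinite S 0) 0).1
  | succ k => exact (nextElt_mem (chain_infinite S (k+1)) _).1

lemma diagSeq_strictMono (S : ℕ → Set ℕ) : StrictMono (diagSeq S) := by
  apply strictMono_nat_of_lt_succ
  intro k
  exact (nextElt_mem (chain_infinite S (k+1)) (diagSeq S k)).2

lemma exists_unsplit (S : ℕ → Set ℕ) :
    ∃ X : Set ℕ, X.Infinite ∧ ∀ k, ¬ Splits (S k) X := by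
  refine ⟨Set.range (diagSeq S), Set.infinite_range_of_injective
    (diagSeq_strictMono S).injective, ?_⟩
  intro k hsplit
  have htail : ∀ j, k + 1 ≤ j → diagSeq S j ∈ chain S (k+1) :=
    fun j hj => chain_subset S hj (diagSeq_mem S j)
  have hfin : ∀ (T : Set ℕ), (∀ m ∈ chain S (k+1), m ∈ T) →
      (Set.range (diagSeq S) \ T).Finite := by
    intro T hT
    apply (Set.finite_Iio (diagSeq S (k+1))).subset
    rintro m ⟨⟨j, rfl⟩, hmT⟩
    rcases Nat.lt_or_ge j (k+1) with hj | hj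
    · exact (diagSeq_strictMono S).lt_iff_lt.mpr hj
    · exact absurd (hT _ (htail j hj)) hmT
  rcases chain_decides S k with h | h
  · exact (Set.not_infinite.mpr (hfin (S k) h)) hsplit.2
  · refine (Set.not_infinite.mpr (hfin (S k)ᶜ h)) ?_
    have : Set.range (diagSeq S) \ (S k)ᶜ = Set.range (diagSeq S) ∩ S k := by
      ext m; simp [Set.mem_diff]
    rw [this]
    exact hsplit.1

noncomputable def stepSeq (X : Set ℕ) (f : ℕ → ℕ) : ℕ → ℕ
  | 0 => nextElt X 0
  | k+1 => nextElt X (max (stepSeq X f k) (f (stepSeq X f k)))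

lemma stepSeq_mem {X : Set ℕ} (hX : X.Infinite) (f : ℕ → ℕ) (k : ℕ) :
    stepSeq X f k ∈ X := by
  cases k with
  | zero => exact (nextElt_mem hX 0).1
  | succ k => exact (nextElt_mem hX _).1

lemma stepSeq_strictMono {X : Set ℕ} (hX : X.Infinite) (f : ℕ → ℕ) :
    StrictMono (stepSeq X f) := by
  apply strictMono_nat_of_lt_succ
  intro k
  exact lt_of_le_of_lt (le_max_left _ _) (nextElt_mem hX _).2

lemma stepSeq_gt {X : Set ℕ} (hX : X.Infinite) (f : ℕ → ℕ) (k : ℕ) :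
    f (stepSeq X f k) < stepSeq X f (k+1) :=
  lt_of_le_of_lt (le_max_right _ _) (nextElt_mem hX _).2

noncomputable def finalSet (X : Set ℕ) (f : ℕ → ℕ) (Z : Set ℕ) (k : ℕ) : Set ℕ :=
  (stepSeq X f '' Z) ∩ Set.Ici k

lemma finalSet_infinite {X : Set ℕ} (hX : X.Infinite) (f : ℕ → ℕ)
    {Z : Set ℕ} (hZ : Z.Infinite) (k : ℕ) : (finalSet X f Z k).Infinite := by
  have h1 : (stepSeq X f '' Z).Infinite :=
    hZ.image ((stepSeq_strictMono hX f).injective.injOn)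
  have : finalSet X f Z k = (stepSeq X f '' Z) \ Set.Iio k := by
    ext m
    simp only [finalSet, Set.mem_inter_iff, Set.mem_Ici, Set.mem_diff, Set.mem_Iio]
    constructor
    · rintro ⟨h1, h2⟩; exact ⟨h1, by omega⟩
    · rintro ⟨h1, h2⟩; exact ⟨h1, by omega⟩
  rw [this]
  exact h1.diff (Set.finite_Iio k)

lemma homog_final (p : Sym2 ℕ → Bool) {X : Set ℕ} (hX : X.Infinite) (f : ℕ → ℕ)
    (Z : Set ℕ) (c : ℕ → Bool) (b : Bool) (N k0 : ℕ)
    (hpair : ∀ i j : ℕ, i < j → N ≤ stepSeq X f i →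
      p s(stepSeq X f i, stepSeq X f j) = c (stepSeq X f i))
    (hcb : ∀ j ∈ Z, k0 ≤ j → c (stepSeq X f j) = b) :
    Homogeneous p (finalSet X f Z (max (stepSeq X f k0) N)) := by
  refine ⟨b, ?_⟩
  have hmono := stepSeq_strictMono hX f
  have main : ∀ u ∈ finalSet X f Z (max (stepSeq X f k0) N),
      ∀ v ∈ finalSet X f Z (max (stepSeq X f k0) N), u < v → p s(u, v) = b := by
    intro u hu v hv huv
    obtain ⟨⟨i, hiZ, hi⟩, hui⟩ := hu
    obtain ⟨⟨j, hjZ, hj⟩, huj⟩ := hv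
    subst hi; subst hj
    have hui' : max (stepSeq X f k0) N ≤ stepSeq X f i := Set.mem_Ici.mp hui
    have hij : i < j := hmono.lt_iff_lt.mp huv
    have hNi : N ≤ stepSeq X f i := le_trans (le_max_right _ _) hui'
    have hk0i : k0 ≤ i :=
      hmono.le_iff_le.mp (le_trans (le_max_left _ _) hui')
    rw [hpair i j hij hNi, hcb i hiZ hk0i]
  intro u hu v hv huv
  rcases lt_or_gt_of_ne huv with h | h
  · exact main u hu v hv h
  · rw [Sym2.eq_swap]; exact main v hv u hu h

lemma dominating_witness_infinite {D : Set (ℕ → ℕ)}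
    (hD : ∀ g : ℕ → ℕ, ∃ f ∈ D, Dominates f g) : Cardinal.aleph0 ≤ Cardinal.mk D := by
  by_contra h
  have hfin : D.Finite := Cardinal.lt_aleph0_iff_set_finite.mp (not_le.mp h)
  obtain ⟨f, hfD, hdom⟩ := hD (fun n => (hfin.toFinset.sup fun q => q n) + 1)
  obtain ⟨n, hn⟩ := hdom.exists
  have h2 : f n ≤ hfin.toFinset.sup fun q => q n :=
    Finset.le_sup (f := fun q : ℕ → ℕ => q n) (hfin.mem_toFinset.mpr hfD)
  have hn' : (hfin.toFinset.sup fun q => q n) + 1 ≤ f n := hn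
  exact Nat.not_succ_le_self _ (hn'.trans h2)

end Aux

/-- `𝔥𝔬𝔪 ≤ max {𝔯_σ, 𝔡}`. -/
theorem hom_le_max_sigmaReaping_dominating :
    homNumber ≤ max sigmaReapingNumber dominatingNumber := by
  classical
  have hrne : {c | ∃ R : Set (Set ℕ), Cardinal.mk R = c ∧
      (∀ X ∈ R, X.Infinite) ∧
      ∀ S : ℕ → Set ℕ, ∃ X ∈ R, ∀ k : ℕ, ¬ Splits (S k) X}.Nonempty := by
    refine ⟨_, {X : Set ℕ | X.Infinite}, rfl, fun X hX => hX, fun S => ?_⟩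
    obtain ⟨X, hX1, hX2⟩ := exists_unsplit S
    exact ⟨X, hX1, hX2⟩
  have hdne : {c | ∃ D : Set (ℕ → ℕ), Cardinal.mk D = c ∧
      ∀ g : ℕ → ℕ, ∃ f ∈ D, Dominates f g}.Nonempty :=
    ⟨_, Set.univ, rfl, fun g =>
      ⟨g, Set.mem_univ g, Filter.Eventually.of_forall fun n => le_refl _⟩⟩
  obtain ⟨R, hRmk, hRinf, hRreap⟩ := csInf_mem hrne
  obtain ⟨D, hDmk, hDdom⟩ := csInf_mem hdne
  have hRmk' : Cardinal.mk ↥R = sigmaReapingNumber := hRmk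
  have hDmk' : Cardinal.mk ↥D = dominatingNumber := hDmk
  set M := max sigmaReapingNumber dominatingNumber with hM
  set F : Set (Set ℕ) :=
    {A | ∃ X ∈ R, ∃ Z ∈ R, ∃ f ∈ D, ∃ k : ℕ, A = finalSet X f Z k} with hF
  have hFinf : ∀ H ∈ F, H.Infinite := by
    rintro H ⟨X, hX, Z, hZ, f, hf, k, rfl⟩
    exact finalSet_infinite (hRinf X hX) f (hRinf Z hZ) k
  have hFhom : ∀ p : Sym2 ℕ → Bool, ∃ H ∈ F, Homogeneous p H := by
    intro p
    obtain ⟨X, hXR, hXuns⟩ := hRreap (fun n => {m | p s(n, m) = true})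
    have hXinf := hRinf X hXR
    set c : ℕ → Bool :=
      fun n => if (X \ {m | p s(n, m) = true}).Finite then true else false with hc
    have key : ∀ n, ∃ t, ∀ m ∈ X, t ≤ m → p s(n, m) = c n := by
      intro n
      by_cases hfin : (X \ {m | p s(n, m) = true}).Finite
      · obtain ⟨t, ht⟩ := hfin.bddAbove
        refine ⟨t + 1, fun m hm hmt => ?_⟩
        have hcn : c n = true := if_pos hfin
        rw [hcn]
        by_contra hne
        have hmem : m ∈ X \ {m | p s(n, m) = true} := ⟨hm, hne⟩
        have := ht hmem
        omega
      · have h2 : (X ∩ {m | p s(n, m) = true}).Finite := by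
          rcases not_and_or.mp (hXuns n) with h | h
          · exact Set.not_infinite.mp h
          · exact absurd (Set.not_infinite.mp h) hfin
        obtain ⟨t, ht⟩ := h2.bddAbove
        refine ⟨t + 1, fun m hm hmt => ?_⟩
        have hcn : c n = false := if_neg hfin
        rw [hcn]
        by_contra hne
        have hptrue : p s(n, m) = true := by
          revert hne; cases p s(n, m) <;> simp
        have hmem : m ∈ X ∩ {m | p s(n, m) = true} := ⟨hm, hptrue⟩
        have := ht hmem
        omega
    choose g gspec using key
    obtain ⟨f, hfD, hfdom⟩ := hDdom g
    obtain ⟨N, hN⟩ := Filter.eventually_atTop.mp hfdom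
    have hpair : ∀ i j : ℕ, i < j → N ≤ stepSeq X f i →
        p s(stepSeq X f i, stepSeq X f j) = c (stepSeq X f i) := by
      intro i j hij hNi
      apply gspec (stepSeq X f i) (stepSeq X f j) (stepSeq_mem hXinf f j)
      have h1 : g (stepSeq X f i) ≤ f (stepSeq X f i) := hN _ hNi
      have h2 : f (stepSeq X f i) < stepSeq X f (i + 1) := stepSeq_gt hXinf f i
      have h3 : stepSeq X f (i + 1) ≤ stepSeq X f j :=
        (stepSeq_strictMono hXinf f).monotone (Nat.succ_le_of_lt hij)
      omega
    obtain ⟨Z, hZR, hZuns⟩ := hRreap (fun _ => {k | c (stepSeq X f k) = true})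
    rcases not_and_or.mp (hZuns 0) with h | h
    · -- Z ∩ T finite : color false
      have hfin : (Z ∩ {k | c (stepSeq X f k) = true}).Finite := Set.not_infinite.mp h
      obtain ⟨k0, hk0⟩ := hfin.bddAbove
      have hcb : ∀ j ∈ Z, k0 + 1 ≤ j → c (stepSeq X f j) = false := by
        intro j hj hjk
        by_contra hne
        have hT : c (stepSeq X f j) = true := by
          revert hne; cases c (stepSeq X f j) <;> simp
        have := hk0 (⟨hj, hT⟩ : j ∈ Z ∩ {k | c (stepSeq X f k) = true})
        omega
      exact ⟨finalSet X f Z (max (stepSeq X f (k0 + 1)) N),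
        ⟨X, hXR, Z, hZR, f, hfD, _, rfl⟩,
        homog_final p hXinf f Z c false N (k0 + 1) hpair hcb⟩
    · -- Z \ T finite : color true
      have hfin : (Z \ {k | c (stepSeq X f k) = true}).Finite := Set.not_infinite.mp h
      obtain ⟨k0, hk0⟩ := hfin.bddAbove
      have hcb : ∀ j ∈ Z, k0 + 1 ≤ j → c (stepSeq X f j) = true := by
        intro j hj hjk
        by_contra hne
        have := hk0 (⟨hj, hne⟩ : j ∈ Z \ {k | c (stepSeq X f k) = true})
        omega
      exact ⟨finalSet X f Z (max (stepSeq X f (k0 + 1)) N),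
        ⟨X, hXR, Z, hZR, f, hfD, _, rfl⟩,
        homog_final p hXinf f Z c true N (k0 + 1) hpair hcb⟩
  have hle : homNumber ≤ Cardinal.mk F := csInf_le' ⟨F, rfl, hFinf, hFhom⟩
  refine hle.trans ?_
  have hchoice : ∀ A : F, ∃ q : (↥R × ↥R × ↥D × ℕ),
      (A : Set ℕ) = finalSet q.1 q.2.2.1 q.2.1 q.2.2.2 := by
    rintro ⟨A, X, hX, Z, hZ, f, hf, k, rfl⟩
    exact ⟨(⟨X, hX⟩, ⟨Z, hZ⟩, ⟨f, hf⟩, k), rfl⟩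
  choose φ hφ using hchoice
  have hinj : Function.Injective φ := by
    intro A B hAB
    apply Subtype.ext
    rw [hφ A, hφ B, hAB]
  have h1 : Cardinal.mk F ≤ Cardinal.mk (↥R × ↥R × ↥D × ℕ) :=
    Cardinal.mk_le_of_injective hinj
  refine h1.trans ?_
  have haleph : Cardinal.aleph0 ≤ M :=
    le_trans (dominating_witness_infinite hDdom) (hDmk' ▸ le_max_right _ _)
  have hRM : Cardinal.mk ↥R ≤ M := hRmk' ▸ le_max_left _ _
  have hDM : Cardinal.mk ↥D ≤ M := hDmk' ▸ le_max_right _ _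
  have step : ∀ a b : Cardinal, a ≤ M → b ≤ M → a * b ≤ M := by
    intro a b ha hb
    exact (Cardinal.mul_le_max a b).trans (sup_le (sup_le ha hb) haleph)
  have heq : Cardinal.mk (↥R × ↥R × ↥D × ℕ) =
      Cardinal.mk ↥R * (Cardinal.mk ↥R * (Cardinal.mk ↥D * Cardinal.mk ℕ)) := by
    simp [Cardinal.mk_prod, Cardinal.lift_id]
  rw [heq]
  refine step _ _ hRM (step _ _ hRM (step _ _ hDM ?_))
  simpa using haleph
end
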